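/- arXiv:2405.19107 — 11 statements merged into one kernel-verified Lean document; each statement's English description precedes it below -/
import Mathlib

section
/- Let Y be a finite nonempty type, q a probability mass function on Y, r : Y → ℝ, and τ > 0. Then the supremum, over all probability mass functions p on Y whose support is contained in the support of q, of Σ_y p(y)·r(y) − τ·Σ_{y : p(y)>0} p(y)·log(p(y)/q(y)), equals τ·log(Σ_y q(y)·exp(r(y)/τ)). -/
/-! Gibbs variational principle. With `f = r / τ`, `Z = ∑ q exp f` and the Gibbs tilt
`g = q exp f / Z`, every admissible `p` satisfies
`∑ p f - KL(p‖q) = log Z - KL(p‖g)`, so by Gibbs' inequality `KL(p‖g) ≥ 0` the objective is at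
most `τ log Z`, with equality at `p = g`. -/

open scoped Classical

/-- The Kullback–Leibler divergence between two probability mass functions on a
finite type, summing only over points where `p` is positive. -/
noncomputable def klDiv {Y : Type*} [Fintype Y] (p q : Y → ℝ) : ℝ :=
  ∑ y ∈ Finset.univ.filter (fun y => 0 < p y), p y * Real.log (p y / q y)

open Finset Real

namespace GibbsVariational

variable {Y : Type*} [Fintype Y]

noncomputable def gibbsTilt (q f : Y → ℝ) (y : Y) : ℝ :=
  q y * exp (f y) / ∑ z, q z * exp (f z)

lemma sum_filter_pos_mul {p : Y → ℝ} (hp : ∀ y, 0 ≤ p y) (g : Y → ℝ) :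
    ∑ y ∈ univ.filter (fun y => 0 < p y), p y * g y = ∑ y, p y * g y :=
  sum_filter_of_ne fun y _ h => (hp y).lt_of_ne fun h0 => h (by rw [← h0, zero_mul])

lemma sub_le_mul_log_div {a b : ℝ} (ha : 0 < a) (hb : 0 < b) : a - b ≤ a * log (a / b) := by
  have h := mul_le_mul_of_nonneg_left (one_sub_inv_le_log_of_pos (div_pos ha hb)) ha.le
  rwa [inv_div, mul_sub, mul_one, mul_div_cancel₀ _ ha.ne'] at h

theorem klDiv_nonneg {p g : Y → ℝ} (hp : ∀ y, 0 ≤ p y) (hg : ∀ y, 0 ≤ g y)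
    (hsum : ∑ y, g y ≤ ∑ y, p y) (hpg : ∀ y, 0 < p y → 0 < g y) : 0 ≤ klDiv p g := by
  set S := univ.filter (fun y => 0 < p y)
  have hpS : ∑ y ∈ S, p y = ∑ y, p y := by simpa using sum_filter_pos_mul hp 1
  have hgS : ∑ y ∈ S, g y ≤ ∑ y, g y :=
    sum_le_sum_of_subset_of_nonneg (filter_subset _ _) fun y _ _ => hg y
  calc 0 ≤ ∑ y ∈ S, (p y - g y) := by rw [sum_sub_distrib]; linarith
    _ ≤ klDiv p g := sum_le_sum fun y hy =>
        have hy : 0 < p y := (mem_filter.1 hy).2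
        sub_le_mul_log_div hy (hpg y hy)

lemma klDiv_self (p : Y → ℝ) : klDiv p p = 0 :=
  sum_eq_zero fun y hy => by rw [div_self (mem_filter.1 hy).2.ne', log_one, mul_zero]

lemma sum_mul_exp_pos {q : Y → ℝ} (hq0 : ∀ y, 0 ≤ q y) (hq : 0 < ∑ y, q y) (f : Y → ℝ) :
    0 < ∑ y, q y * exp (f y) := by
  obtain ⟨y, -, hy⟩ := exists_lt_of_sum_lt (f := fun _ => (0 : ℝ)) (by simpa using hq)
  exact sum_pos' (fun z _ => mul_nonneg (hq0 z) (exp_pos _).le)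
    ⟨y, mem_univ y, mul_pos hy (exp_pos _)⟩

section

variable {q f : Y → ℝ} (hZ : 0 < ∑ y, q y * exp (f y))
include hZ

lemma gibbsTilt_nonneg (hq0 : ∀ y, 0 ≤ q y) (y : Y) : 0 ≤ gibbsTilt q f y :=
  div_nonneg (mul_nonneg (hq0 y) (exp_pos _).le) hZ.le

lemma sum_gibbsTilt : ∑ y, gibbsTilt q f y = 1 := by
  simp only [gibbsTilt]
  rw [← sum_div, div_self hZ.ne']

lemma gibbsTilt_pos_iff (y : Y) : 0 < gibbsTilt q f y ↔ 0 < q y := by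
  rw [gibbsTilt, div_pos_iff_of_pos_right hZ, mul_pos_iff_of_pos_right (exp_pos _)]

lemma log_div_gibbsTilt {p : ℝ} {y : Y} (hp : 0 < p) (hq : 0 < q y) :
    log (p / gibbsTilt q f y) = log (p / q y) - f y + log (∑ z, q z * exp (f z)) := by
  have hqe : 0 < q y * exp (f y) := mul_pos hq (exp_pos _)
  rw [gibbsTilt, log_div hp.ne' (div_pos hqe hZ).ne', log_div hqe.ne' hZ.ne',
    log_mul hq.ne' (exp_pos _).ne', log_exp, log_div hp.ne' hq.ne']
  ring

theorem klDiv_gibbsTilt {p : Y → ℝ} (hp0 : ∀ y, 0 ≤ p y) (hp1 : ∑ y, p y = 1)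
    (hpq : ∀ y, 0 < p y → 0 < q y) :
    klDiv p (gibbsTilt q f) = klDiv p q - ∑ y, p y * f y + log (∑ z, q z * exp (f z)) := by
  have hterm : ∀ y ∈ univ.filter (fun y => 0 < p y), p y * log (p y / gibbsTilt q f y) =
      p y * log (p y / q y) - p y * f y + p y * log (∑ z, q z * exp (f z)) := fun y hy => by
    have hy : 0 < p y := (mem_filter.1 hy).2
    rw [log_div_gibbsTilt hZ hy (hpq y hy)]
    ring
  have hpS : ∑ y ∈ univ.filter (fun y => 0 < p y), p y = 1 := by
    simpa [hp1] using sum_filter_pos_mul hp0 1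
  rw [klDiv, sum_congr rfl hterm, sum_add_distrib, sum_sub_distrib, sum_filter_pos_mul hp0 f,
    ← sum_mul, hpS, one_mul, klDiv]

end

end GibbsVariational

open GibbsVariational in
theorem dro_stmt_0_general {Y : Type*} [Fintype Y]
    (q : Y → ℝ) (hq0 : ∀ y, 0 ≤ q y) (hq1 : ∑ y, q y = 1)
    (r : Y → ℝ) (τ : ℝ) (hτ : 0 < τ) :
    sSup {v : ℝ | ∃ p : Y → ℝ,
        (∀ y, 0 ≤ p y) ∧ (∑ y, p y = 1) ∧ (∀ y, 0 < p y → 0 < q y) ∧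
        v = (∑ y, p y * r y) - τ * klDiv p q} =
      τ * Real.log (∑ y, q y * Real.exp (r y / τ)) := by
  set f : Y → ℝ := fun y => r y / τ
  have hZ : 0 < ∑ y, q y * exp (f y) := sum_mul_exp_pos hq0 (hq1 ▸ one_pos) f
  have hobjective : ∀ p : Y → ℝ, (∀ y, 0 ≤ p y) → ∑ y, p y = 1 → (∀ y, 0 < p y → 0 < q y) →
      (∑ y, p y * r y) - τ * klDiv p q =
        τ * log (∑ y, q y * exp (f y)) - τ * klDiv p (gibbsTilt q f) := by
    intro p hp0 hp1 hpq
    have hr : ∑ y, p y * r y = τ * ∑ y, p y * f y := by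
      rw [mul_sum]
      exact sum_congr rfl fun y _ => by simp only [f]; field_simp
    rw [klDiv_gibbsTilt hZ hp0 hp1 hpq, hr]
    ring
  have hg0 := gibbsTilt_nonneg hZ hq0
  have hg1 := sum_gibbsTilt hZ
  refine IsGreatest.csSup_eq ⟨⟨gibbsTilt q f, hg0, hg1,
    fun y => (gibbsTilt_pos_iff hZ y).1, ?_⟩, ?_⟩
  · rw [hobjective _ hg0 hg1 fun y => (gibbsTilt_pos_iff hZ y).1, klDiv_self, mul_zero, sub_zero]
  · rintro v ⟨p, hp0, hp1, hpq, rfl⟩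
    have hkl : 0 ≤ klDiv p (gibbsTilt q f) :=
      klDiv_nonneg hp0 hg0 (by rw [hg1, hp1]) fun y hy => (gibbsTilt_pos_iff hZ y).2 (hpq y hy)
    rw [hobjective p hp0 hp1 hpq]
    linarith [mul_nonneg hτ.le hkl]

theorem dro_stmt_0 {Y : Type*} [Fintype Y] [Nonempty Y]
    (q : Y → ℝ) (hq0 : ∀ y, 0 ≤ q y) (hq1 : ∑ y, q y = 1)
    (r : Y → ℝ) (τ : ℝ) (hτ : 0 < τ) :
    sSup {v : ℝ | ∃ p : Y → ℝ,
        (∀ y, 0 ≤ p y) ∧ (∑ y, p y = 1) ∧ (∀ y, 0 < p y → 0 < q y) ∧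
        v = (∑ y, p y * r y) - τ * klDiv p q} =
      τ * Real.log (∑ y, q y * Real.exp (r y / τ)) :=
  dro_stmt_0_general q hq0 hq1 r τ hτ
end

section
/- Let Y be a finite nonempty type, q a probability mass function on Y, r : Y → ℝ, and τ > 0. Define p*(y) = q(y)·exp(r(y)/τ) / (Σ_{y'} q(y')·exp(r(y')/τ)). Then p* is a probability mass function with the same support as q, and for every probability mass function p on Y with support contained in the support of q, Σ_y p(y)·r(y) − τ·KL(p‖q) ≤ Σ_y p*(y)·r(y) − τ·KL(p*‖q), with equality if and only if p = p*. -/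
open scoped Classical

lemma gibbs {Y : Type*} [Fintype Y] (p s : Y → ℝ)
    (hp0 : ∀ y, 0 ≤ p y) (hp1 : ∑ y, p y = 1)
    (hs0 : ∀ y, 0 ≤ s y) (hs1 : ∑ y, s y = 1)
    (hsupp : ∀ y, 0 < p y → 0 < s y) :
    0 ≤ klDiv p s ∧ (klDiv p s = 0 ↔ p = s) := by
  set A := Finset.univ.filter (fun y => 0 < p y) with hA
  have hterm : ∀ y ∈ A, p y - s y ≤ p y * Real.log (p y / s y) := by
    intro y hy
    have hpy : 0 < p y := (Finset.mem_filter.mp hy).2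
    have hsy : 0 < s y := hsupp y hpy
    have hlog : 1 - s y / p y ≤ Real.log (p y / s y) := by
      have h := Real.log_le_sub_one_of_pos (div_pos hsy hpy)
      rw [Real.log_div hsy.ne' hpy.ne'] at h
      rw [Real.log_div hpy.ne' hsy.ne']
      linarith
    have hmul := mul_le_mul_of_nonneg_left hlog hpy.le
    have : p y * (1 - s y / p y) = p y - s y := by field_simp
    calc p y - s y = p y * (1 - s y / p y) := this.symm
      _ ≤ p y * Real.log (p y / s y) := hmul
  have hAp : ∑ y ∈ A, p y = 1 := by
    rw [← hp1]
    apply Finset.sum_subset (Finset.filter_subset _ _)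
    intro y _ hy
    have : ¬ 0 < p y := by simpa [hA] using hy
    linarith [hp0 y]
  have hAs : ∑ y ∈ A, s y ≤ 1 := by
    rw [← hs1]
    exact Finset.sum_le_sum_of_subset_of_nonneg (Finset.filter_subset _ _)
      (fun y _ _ => hs0 y)
  have hlow : 1 - ∑ y ∈ A, s y ≤ klDiv p s := by
    have := Finset.sum_le_sum hterm
    rw [Finset.sum_sub_distrib, hAp] at this
    exact this
  have hnonneg : 0 ≤ klDiv p s := by linarith
  refine ⟨hnonneg, ?_, ?_⟩
  · intro h
    have hAs1 : ∑ y ∈ A, s y = 1 := by linarith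
    have hsum0 : ∑ y ∈ A, (p y - s y) = 0 := by
      rw [Finset.sum_sub_distrib, hAp, hAs1]; ring
    have heq : ∀ y ∈ A, p y * Real.log (p y / s y) = p y - s y := by
      by_contra hne
      push_neg at hne
      obtain ⟨y, hy, hys⟩ := hne
      have hlt : p y - s y < p y * Real.log (p y / s y) :=
        lt_of_le_of_ne (hterm y hy) (Ne.symm hys)
      have : ∑ y ∈ A, (p y - s y) < klDiv p s :=
        Finset.sum_lt_sum hterm ⟨y, hy, hlt⟩
      rw [hsum0, h] at this
      exact lt_irrefl 0 this
    -- on A, p = s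
    have honA : ∀ y ∈ A, p y = s y := by
      intro y hy
      have hpy : 0 < p y := (Finset.mem_filter.mp hy).2
      have hsy : 0 < s y := hsupp y hpy
      by_contra hne
      have hx1 : s y / p y ≠ 1 := by
        intro h1
        exact hne (by field_simp at h1; linarith)
      have hstrict := Real.log_lt_sub_one_of_pos (div_pos hsy hpy) hx1
      rw [Real.log_div hsy.ne' hpy.ne'] at hstrict
      have hlogeq : Real.log (p y / s y) = (p y - s y) / p y := by
        have := heq y hy
        field_simp at this ⊢
        linarith [mul_comm (p y) (Real.log (p y / s y))]
      rw [Real.log_div hpy.ne' hsy.ne'] at hlogeq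
      have : Real.log (s y) - Real.log (p y) = -((p y - s y) / p y) := by linarith
      rw [this] at hstrict
      have hpne : p y ≠ 0 := hpy.ne'
      rw [div_sub_one hpne] at hstrict
      -- hstrict : -((p y - s y)/p y) < (s y - p y)/p y
      have : -((p y - s y) / p y) = (s y - p y) / p y := by ring
      rw [this] at hstrict
      exact lt_irrefl _ hstrict
    -- off A, s = 0 and p = 0
    have hcompl : ∑ y ∈ Finset.univ \ A, s y = 0 := by
      have := Finset.sum_sdiff_eq_sub (Finset.subset_univ A) (f := s)
      rw [hs1, hAs1] at this
      linarith
    have hoffA : ∀ y ∈ Finset.univ \ A, s y = 0 := by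
      intro y hy
      have := (Finset.sum_eq_zero_iff_of_nonneg (fun y _ => hs0 y)).mp hcompl
      exact this y hy
    funext y
    by_cases hy : y ∈ A
    · exact honA y hy
    · have hpy : p y = 0 := by
        have : ¬ 0 < p y := by simpa [hA] using hy
        linarith [hp0 y]
      have hsy : s y = 0 := hoffA y (Finset.mem_sdiff.mpr ⟨Finset.mem_univ y, hy⟩)
      rw [hpy, hsy]
  · intro h
    subst h
    unfold klDiv
    apply Finset.sum_eq_zero
    intro y hy
    have hpy : 0 < p y := (Finset.mem_filter.mp hy).2
    rw [div_self hpy.ne', Real.log_one, mul_zero]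

theorem dro_stmt_1 {Y : Type*} [Fintype Y] [Nonempty Y]
    (q : Y → ℝ) (hq0 : ∀ y, 0 ≤ q y) (hq1 : ∑ y, q y = 1)
    (r : Y → ℝ) (τ : ℝ) (hτ : 0 < τ)
    (pstar : Y → ℝ)
    (hpstar : ∀ y, pstar y =
      q y * Real.exp (r y / τ) / ∑ y', q y' * Real.exp (r y' / τ)) :
    ((∀ y, 0 ≤ pstar y) ∧ (∑ y, pstar y = 1) ∧ (∀ y, 0 < pstar y ↔ 0 < q y)) ∧
    ∀ p : Y → ℝ, (∀ y, 0 ≤ p y) → (∑ y, p y = 1) → (∀ y, 0 < p y → 0 < q y) →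
      ((∑ y, p y * r y) - τ * klDiv p q ≤ (∑ y, pstar y * r y) - τ * klDiv pstar q ∧
        ((∑ y, p y * r y) - τ * klDiv p q = (∑ y, pstar y * r y) - τ * klDiv pstar q ↔
          p = pstar)) := by
  set Z : ℝ := ∑ y', q y' * Real.exp (r y' / τ) with hZ
  have hZpos : 0 < Z := by
    obtain ⟨y0, hy0⟩ : ∃ y, 0 < q y := by
      by_contra h
      push_neg at h
      have : ∀ y, q y = 0 := fun y => le_antisymm (h y) (hq0 y)
      simp [this] at hq1
    apply Finset.sum_pos'
    · intro y _; exact mul_nonneg (hq0 y) (Real.exp_pos _).le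
    · exact ⟨y0, Finset.mem_univ y0, mul_pos hy0 (Real.exp_pos _)⟩
  have hps0 : ∀ y, 0 ≤ pstar y := by
    intro y
    rw [hpstar y]
    exact div_nonneg (mul_nonneg (hq0 y) (Real.exp_pos _).le) hZpos.le
  have hps1 : ∑ y, pstar y = 1 := by
    simp only [hpstar]
    rw [← Finset.sum_div, ← hZ, div_self hZpos.ne']
  have hpsiff : ∀ y, 0 < pstar y ↔ 0 < q y := by
    intro y
    constructor
    · intro h
      by_contra hqy
      have : q y = 0 := le_antisymm (le_of_not_gt hqy) (hq0 y)
      rw [hpstar y, this, zero_mul, zero_div] at h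
      exact lt_irrefl 0 h
    · intro h
      rw [hpstar y]
      exact div_pos (mul_pos h (Real.exp_pos _)) hZpos
  -- key identity
  have hF : ∀ p : Y → ℝ, (∀ y, 0 ≤ p y) → (∑ y, p y = 1) → (∀ y, 0 < p y → 0 < q y) →
      (∑ y, p y * r y) - τ * klDiv p q = τ * Real.log Z - τ * klDiv p pstar := by
    intro p hp0 hp1 hsupp
    set A := Finset.univ.filter (fun y => 0 < p y) with hA
    have hAp : ∑ y ∈ A, p y = 1 := by
      rw [← hp1]
      apply Finset.sum_subset (Finset.filter_subset _ _)
      intro y _ hy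
      have : ¬ 0 < p y := by simpa [hA] using hy
      linarith [hp0 y]
    have hApr : ∑ y ∈ A, p y * r y = ∑ y, p y * r y := by
      apply Finset.sum_subset (Finset.filter_subset _ _)
      intro y _ hy
      have : ¬ 0 < p y := by simpa [hA] using hy
      have : p y = 0 := by linarith [hp0 y]
      rw [this, zero_mul]
    have hkey : klDiv p pstar = klDiv p q - (∑ y, p y * r y) / τ + Real.log Z := by
      unfold klDiv
      rw [← hA]
      have : ∀ y ∈ A, p y * Real.log (p y / pstar y)
          = p y * Real.log (p y / q y) - p y * (r y / τ) + p y * Real.log Z := by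
        intro y hy
        have hpy : 0 < p y := (Finset.mem_filter.mp hy).2
        have hqy : 0 < q y := hsupp y hpy
        have hpsy : pstar y = q y * Real.exp (r y / τ) / Z := hpstar y
        have hlog : Real.log (pstar y) = Real.log (q y) + r y / τ - Real.log Z := by
          rw [hpsy, Real.log_div (by positivity) hZpos.ne',
            Real.log_mul hqy.ne' (Real.exp_pos _).ne', Real.log_exp]
        have hpsypos : 0 < pstar y := (hpsiff y).mpr hqy
        rw [Real.log_div hpy.ne' hpsypos.ne', Real.log_div hpy.ne' hqy.ne', hlog]
        ring
      rw [Finset.sum_congr rfl this, Finset.sum_add_distrib, Finset.sum_sub_distrib,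
        ← Finset.sum_mul, hAp, one_mul]
      have : ∑ y ∈ A, p y * (r y / τ) = (∑ y ∈ A, p y * r y) / τ := by
        rw [Finset.sum_div]
        apply Finset.sum_congr rfl
        intro y _
        ring
      rw [this, hApr]
    rw [hkey]
    field_simp
    ring
  refine ⟨⟨hps0, hps1, hpsiff⟩, ?_⟩
  intro p hp0 hp1 hsupp
  have hsupps : ∀ y, 0 < p y → 0 < pstar y := fun y hy => (hpsiff y).mpr (hsupp y hy)
  have hsuppstar : ∀ y, 0 < pstar y → 0 < q y := fun y hy => (hpsiff y).mp hy
  obtain ⟨hkl_nonneg, hkl_iff⟩ := gibbs p pstar hp0 hp1 hps0 hps1 hsupps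
  have hkl_star : klDiv pstar pstar = 0 :=
    (gibbs pstar pstar hps0 hps1 hps0 hps1 (fun _ h => h)).2.mpr rfl
  have hFp := hF p hp0 hp1 hsupp
  have hFps := hF pstar hps0 hps1 hsuppstar
  rw [hkl_star, mul_zero, sub_zero] at hFps
  constructor
  · rw [hFp, hFps]
    nlinarith
  · rw [hFp, hFps]
    constructor
    · intro h
      apply hkl_iff.mp
      have : τ * klDiv p pstar = 0 := by linarith
      exact (mul_eq_zero.mp this).resolve_left hτ.ne'
    · intro h
      rw [h, hkl_star, mul_zero, sub_zero]
end

section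
/- Let X and Y be finite nonempty types, ρ a probability mass function on X, π_ref(·|x) a probability mass function on Y for each x, r : X × Y → ℝ, and τ > 0. Define V*(x) = τ·log(Σ_y π_ref(y|x)·exp(r(x,y)/τ)) and π*(y|x) = π_ref(y|x)·exp(r(x,y)/τ)/exp(V*(x)/τ). Then for every conditional policy π with support of π(·|x) contained in the support of π_ref(·|x) for all x, Σ_x ρ(x)·(Σ_y π(y|x)·r(x,y) − τ·KL(π(·|x)‖π_ref(·|x))) ≤ Σ_x ρ(x)·(Σ_y π*(y|x)·r(x,y) − τ·KL(π*(·|x)‖π_ref(·|x))) = Σ_x ρ(x)·V*(x), and any maximiser π agrees with π* at every x in the support of ρ. -/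
open scoped Classical

/-- The KL-regularised objective of a conditional policy `π`. -/
noncomputable def regObjective {X Y : Type*} [Fintype X] [Fintype Y]
    (ρ : X → ℝ) (πref : X → Y → ℝ) (r : X → Y → ℝ) (τ : ℝ) (π : X → Y → ℝ) : ℝ :=
  ∑ x, ρ x * ((∑ y, π x y * r x y) - τ * klDiv (π x) (πref x))

lemma kl_key {Y : Type*} [Fintype Y] (p q : Y → ℝ)
    (hp0 : ∀ y, 0 ≤ p y) (hq0 : ∀ y, 0 ≤ q y)
    (hp1 : ∑ y, p y = 1) (hq1 : ∑ y, q y = 1)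
    (hsupp : ∀ y, 0 < p y → 0 < q y) :
    0 ≤ klDiv p q ∧ (klDiv p q = 0 → p = q) := by
  classical
  set S := Finset.univ.filter (fun y => 0 < p y) with hS
  have hmemS : ∀ y, y ∈ S ↔ 0 < p y := by intro y; simp [hS]
  have hpzero : ∀ y, y ∉ S → p y = 0 := by
    intro y hy
    have := (hmemS y).not.1 hy
    have := hp0 y
    linarith [lt_or_ge 0 (p y) |>.resolve_left ((hmemS y).not.1 hy)]
  have hpoint : ∀ y ∈ S, p y - q y ≤ p y * Real.log (p y / q y) := by
    intro y hy
    have hpy : 0 < p y := (hmemS y).1 hy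
    have hqy : 0 < q y := hsupp y hpy
    have h1 : Real.log (q y / p y) ≤ q y / p y - 1 :=
      Real.log_le_sub_one_of_pos (div_pos hqy hpy)
    have h2 : Real.log (p y / q y) = - Real.log (q y / p y) := by
      rw [← Real.log_inv]; congr 1; field_simp
    have h3 : p y * (q y / p y) = q y := by field_simp
    nlinarith [mul_le_mul_of_nonneg_left h1 hpy.le]
  have hpS : ∑ y ∈ S, p y = 1 := by
    rw [← hp1]; exact Finset.sum_subset (Finset.subset_univ S)
      (fun y _ hy => hpzero y hy)
  have hqS : ∑ y ∈ S, q y ≤ 1 := by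
    rw [← hq1]
    exact Finset.sum_le_sum_of_subset_of_nonneg (Finset.subset_univ S)
      (fun y _ _ => hq0 y)
  have hsumdiff : 0 ≤ ∑ y ∈ S, (p y - q y) := by
    rw [Finset.sum_sub_distrib, hpS]; linarith
  have hsum_le : ∑ y ∈ S, (p y - q y) ≤ klDiv p q := by
    unfold klDiv; rw [← hS]; exact Finset.sum_le_sum hpoint
  refine ⟨le_trans hsumdiff hsum_le, fun h0 => ?_⟩
  have hdz : ∑ y ∈ S, (p y - q y) = 0 := le_antisymm (h0 ▸ hsum_le) hsumdiff
  have heqS : ∀ y ∈ S, p y - q y = p y * Real.log (p y / q y) := by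
    have : ∑ y ∈ S, (p y - q y) = ∑ y ∈ S, p y * Real.log (p y / q y) := by
      rw [hdz]; rw [show (∑ y ∈ S, p y * Real.log (p y / q y)) = klDiv p q from by
        unfold klDiv; rw [← hS]]
      exact h0.symm
    exact (Finset.sum_eq_sum_iff_of_le hpoint).1 this
  have hpqS : ∀ y ∈ S, p y = q y := by
    intro y hy
    have hpy : 0 < p y := (hmemS y).1 hy
    have hqy : 0 < q y := hsupp y hpy
    by_contra hne
    have hne' : q y / p y ≠ 1 := by
      intro h; apply hne; field_simp at h; linarith
    have h1 : Real.log (q y / p y) < q y / p y - 1 :=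
      Real.log_lt_sub_one_of_pos (div_pos hqy hpy) hne'
    have h2 : Real.log (p y / q y) = - Real.log (q y / p y) := by
      rw [← Real.log_inv]; congr 1; field_simp
    have h3 : p y * (q y / p y) = q y := by field_simp
    have := heqS y hy
    nlinarith [mul_lt_mul_of_pos_left h1 hpy]
  have hqS1 : ∑ y ∈ S, q y = 1 := by
    rw [Finset.sum_sub_distrib, hpS] at hdz; linarith
  have hqout : ∀ y, y ∉ S → q y = 0 := by
    have hsplit : ∑ y ∈ S, q y + ∑ y ∈ Sᶜ, q y = 1 := by
      rw [Finset.sum_add_sum_compl]; exact hq1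
    have : ∑ y ∈ Sᶜ, q y = 0 := by linarith
    intro y hy
    exact (Finset.sum_eq_zero_iff_of_nonneg (fun y _ => hq0 y)).1 this y
      (Finset.mem_compl.2 hy)
  funext y
  by_cases hy : y ∈ S
  · exact hpqS y hy
  · rw [hpzero y hy, hqout y hy]

theorem dro_stmt_2 {X Y : Type*} [Fintype X] [Fintype Y] [Nonempty X] [Nonempty Y]
    (ρ : X → ℝ) (hρ0 : ∀ x, 0 ≤ ρ x) (hρ1 : ∑ x, ρ x = 1)
    (πref : X → Y → ℝ) (href0 : ∀ x y, 0 ≤ πref x y) (href1 : ∀ x, ∑ y, πref x y = 1)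
    (r : X → Y → ℝ) (τ : ℝ) (hτ : 0 < τ)
    (Vstar : X → ℝ)
    (hV : ∀ x, Vstar x = τ * Real.log (∑ y, πref x y * Real.exp (r x y / τ)))
    (πstar : X → Y → ℝ)
    (hπ : ∀ x y, πstar x y = πref x y * Real.exp (r x y / τ) / Real.exp (Vstar x / τ)) :
    (∀ π : X → Y → ℝ, (∀ x y, 0 ≤ π x y) → (∀ x, ∑ y, π x y = 1) →
        (∀ x y, 0 < π x y → 0 < πref x y) →
        regObjective ρ πref r τ π ≤ regObjective ρ πref r τ πstar) ∧
    regObjective ρ πref r τ πstar = ∑ x, ρ x * Vstar x ∧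
    (∀ π : X → Y → ℝ, (∀ x y, 0 ≤ π x y) → (∀ x, ∑ y, π x y = 1) →
        (∀ x y, 0 < π x y → 0 < πref x y) →
        regObjective ρ πref r τ π = regObjective ρ πref r τ πstar →
        ∀ x, 0 < ρ x → ∀ y, π x y = πstar x y) := by
  classical
  -- the partition function
  set Z : X → ℝ := fun x => ∑ y, πref x y * Real.exp (r x y / τ) with hZ
  have hZpos : ∀ x, 0 < Z x := by
    intro x
    have hex : ∃ y, 0 < πref x y := by
      by_contra h
      push_neg at h
      have hz : ∀ y, πref x y = 0 := fun y => le_antisymm (h y) (href0 x y)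
      have h1 := href1 x
      rw [Finset.sum_congr rfl (fun y _ => hz y)] at h1
      simp at h1
    obtain ⟨y0, hy0⟩ := hex
    have : 0 < πref x y0 * Real.exp (r x y0 / τ) := mul_pos hy0 (Real.exp_pos _)
    refine Finset.sum_pos' (fun y _ => mul_nonneg (href0 x y) (Real.exp_pos _).le) ⟨y0, Finset.mem_univ _, this⟩
  have hexpV : ∀ x, Real.exp (Vstar x / τ) = Z x := by
    intro x
    rw [hV x, mul_div_cancel_left₀ _ hτ.ne']
    exact Real.exp_log (hZpos x)
  have hstar0 : ∀ x y, 0 ≤ πstar x y := by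
    intro x y
    rw [hπ x y]
    have := href0 x y
    positivity
  have hstarpos : ∀ x y, 0 < πref x y → 0 < πstar x y := by
    intro x y h
    rw [hπ x y]
    positivity
  have hstar1 : ∀ x, ∑ y, πstar x y = 1 := by
    intro x
    rw [show (∑ y, πstar x y) = ∑ y, πref x y * Real.exp (r x y / τ) / Real.exp (Vstar x / τ)
      from Finset.sum_congr rfl (fun y _ => hπ x y), ← Finset.sum_div, hexpV x]
    exact div_self (hZpos x).ne'
  have hstarsupp : ∀ x y, 0 < πstar x y → 0 < πref x y := by
    intro x y h
    by_contra hc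
    push_neg at hc
    have : πref x y = 0 := le_antisymm hc (href0 x y)
    rw [hπ x y, this] at h
    simp at h
  -- key pointwise identity
  have key : ∀ (π : Y → ℝ) (x : X), (∀ y, 0 ≤ π y) → (∑ y, π y = 1) →
      (∀ y, 0 < π y → 0 < πref x y) →
      (∑ y, π y * r x y) - τ * klDiv π (πref x) = Vstar x - τ * klDiv π (πstar x) := by
    intro π x hπ0 hπ1 hπsupp
    set S := Finset.univ.filter (fun y => 0 < π y) with hS
    have hpzero : ∀ y, y ∉ S → π y = 0 := by
      intro y hy
      simp only [hS, Finset.mem_filter, Finset.mem_univ, true_and, not_lt] at hy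
      exact le_antisymm hy (hπ0 y)
    have hπS : ∑ y ∈ S, π y = 1 := by
      rw [← hπ1]
      exact Finset.sum_subset (Finset.subset_univ S) (fun y _ hy => hpzero y hy)
    have hπrS : ∑ y ∈ S, π y * r x y = ∑ y, π y * r x y :=
      Finset.sum_subset (Finset.subset_univ S)
        (fun y _ hy => by rw [hpzero y hy, zero_mul])
    have hterm : ∀ y ∈ S, π y * Real.log (π y / πstar x y)
        = π y * Real.log (π y / πref x y) - π y * (r x y / τ) + π y * (Vstar x / τ) := by
      intro y hy
      have hpy : 0 < π y := by
        simpa [hS] using hy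
      have href : 0 < πref x y := hπsupp y hpy
      have hst : 0 < πstar x y := hstarpos x y href
      have hlogst : Real.log (πstar x y) = Real.log (πref x y) + r x y / τ - Vstar x / τ := by
        rw [hπ x y, Real.log_div (by positivity) (Real.exp_pos _).ne',
          Real.log_mul href.ne' (Real.exp_pos _).ne', Real.log_exp, Real.log_exp]
      rw [Real.log_div hpy.ne' hst.ne', Real.log_div hpy.ne' href.ne', hlogst]
      ring
    have hklstar : klDiv π (πstar x) = klDiv π (πref x) - (∑ y, π y * r x y) / τ + Vstar x / τ := by
      unfold klDiv
      rw [← hS]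
      rw [Finset.sum_congr rfl hterm, Finset.sum_add_distrib, Finset.sum_sub_distrib,
        ← Finset.sum_mul, hπS, one_mul]
      have : ∑ y ∈ S, π y * (r x y / τ) = (∑ y, π y * r x y) / τ := by
        rw [← hπrS, Finset.sum_div]
        exact Finset.sum_congr rfl (fun y _ => by ring)
      rw [this]
    rw [hklstar]
    field_simp
    ring
  -- πstar achieves value Vstar
  have hklself : ∀ x, klDiv (πstar x) (πstar x) = 0 := by
    intro x
    unfold klDiv
    apply Finset.sum_eq_zero
    intro y hy
    have hpy : 0 < πstar x y := by
      simpa using hy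
    rw [div_self hpy.ne', Real.log_one, mul_zero]
  have hobjstar : regObjective ρ πref r τ πstar = ∑ x, ρ x * Vstar x := by
    unfold regObjective
    apply Finset.sum_congr rfl
    intro x _
    congr 1
    have := key (πstar x) x (hstar0 x) (hstar1 x) (fun y => hstarsupp x y)
    rw [this, hklself x, mul_zero, sub_zero]
  -- objective of any feasible π
  have hobj : ∀ (π : X → Y → ℝ), (∀ x y, 0 ≤ π x y) → (∀ x, ∑ y, π x y = 1) →
      (∀ x y, 0 < π x y → 0 < πref x y) →
      regObjective ρ πref r τ π = ∑ x, ρ x * (Vstar x - τ * klDiv (π x) (πstar x)) := by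
    intro π h0 h1 hsupp
    unfold regObjective
    apply Finset.sum_congr rfl
    intro x _
    congr 1
    exact key (π x) x (h0 x) (h1 x) (fun y => hsupp x y)
  have hklnn : ∀ (π : X → Y → ℝ), (∀ x y, 0 ≤ π x y) → (∀ x, ∑ y, π x y = 1) →
      (∀ x y, 0 < π x y → 0 < πref x y) → ∀ x,
      0 ≤ klDiv (π x) (πstar x) ∧ (klDiv (π x) (πstar x) = 0 → π x = πstar x) := by
    intro π h0 h1 hsupp x
    exact kl_key (π x) (πstar x) (h0 x) (hstar0 x) (h1 x) (hstar1 x)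
      (fun y hy => hstarpos x y (hsupp x y hy))
  refine ⟨?_, hobjstar, ?_⟩
  · intro π h0 h1 hsupp
    rw [hobj π h0 h1 hsupp, hobjstar]
    apply Finset.sum_le_sum
    intro x _
    have hkl := (hklnn π h0 h1 hsupp x).1
    have := hρ0 x
    nlinarith [mul_nonneg (hρ0 x) (mul_nonneg hτ.le hkl)]
  · intro π h0 h1 hsupp heq x hρx y
    rw [hobj π h0 h1 hsupp, hobjstar] at heq
    have hker : ∑ x, ρ x * (τ * klDiv (π x) (πstar x)) = 0 := by
      have : ∑ x, ρ x * (Vstar x - τ * klDiv (π x) (πstar x))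
          = ∑ x, (ρ x * Vstar x - ρ x * (τ * klDiv (π x) (πstar x))) := by
        apply Finset.sum_congr rfl; intro x _; ring
      rw [this, Finset.sum_sub_distrib] at heq
      linarith
    have hall : ∀ x ∈ Finset.univ, ρ x * (τ * klDiv (π x) (πstar x)) = 0 := by
      apply (Finset.sum_eq_zero_iff_of_nonneg _).1 hker
      intro x _
      have hkl := (hklnn π h0 h1 hsupp x).1
      have := hρ0 x
      positivity
    have := hall x (Finset.mem_univ x)
    have hkl0 : klDiv (π x) (πstar x) = 0 := by
      rcases mul_eq_zero.1 this with h | h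
      · exact absurd h hρx.ne'
      · rcases mul_eq_zero.1 h with h' | h'
        · exact absurd h' hτ.ne'
        · exact h'
    have := (hklnn π h0 h1 hsupp x).2 hkl0
    rw [this]
end

section
/- Let X and Y be finite nonempty types, ρ a probability mass function on X, and for each x let π_ref(·|x) and μ(·|x) be probability mass functions on Y with the support of μ(·|x) contained in the support of π_ref(·|x); let r : X × Y → ℝ and τ > 0. Define V*(x) = τ·log(Σ_y π_ref(y|x)·exp(r(x,y)/τ)) and π*(y|x) = π_ref(y|x)·exp(r(x,y)/τ)/exp(V*(x)/τ). Then the DRO loss satisfies L(π*, V*) = 0, and L(π, V) ≥ 0 for every conditional policy π (positive on the support of π_ref(·|x)) and every V : X → ℝ; hence (π*, V*) is a global minimum of L. -/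
/-! The loss is a `ρ ⊗ μ`-weighted sum of squared residuals `r - V - τ log (π / π_ref)`, hence
nonnegative; and `π*` is the Gibbs policy whose log-ratio `τ log (π* / π_ref)` is exactly `r - V*`
wherever `π_ref > 0`, in particular on the support of `μ`, so all residuals that carry weight
vanish. -/

/-- The DRO loss of a conditional policy `π` and a value function `V`. -/
noncomputable def droLoss {X Y : Type*} [Fintype X] [Fintype Y]
    (ρ : X → ℝ) (μ πref : X → Y → ℝ) (r : X → Y → ℝ) (τ : ℝ)
    (π : X → Y → ℝ) (V : X → ℝ) : ℝ :=
  (1 / 2) * ∑ x, ρ x *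
    ∑ y, μ x y * (r x y - V x - τ * Real.log (π x y / πref x y)) ^ 2

theorem sub_sub_mul_log_gibbs_div_eq_zero {p r V τ : ℝ} (hp : p ≠ 0) (hτ : τ ≠ 0) :
    r - V - τ * Real.log (p * Real.exp (r / τ) / Real.exp (V / τ) / p) = 0 := by
  rw [mul_div_assoc, mul_div_cancel_left₀ _ hp, ← Real.exp_sub, Real.log_exp]
  field_simp
  ring

section

variable {X Y : Type*} [Fintype X] [Fintype Y]

theorem droLoss_nonneg {ρ : X → ℝ} {μ : X → Y → ℝ} (hρ : ∀ x, 0 ≤ ρ x)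
    (hμ : ∀ x y, 0 ≤ μ x y) (πref r : X → Y → ℝ) (τ : ℝ) (π : X → Y → ℝ) (V : X → ℝ) :
    0 ≤ droLoss ρ μ πref r τ π V :=
  mul_nonneg (by norm_num) <| Finset.sum_nonneg fun x _ => mul_nonneg (hρ x) <|
    Finset.sum_nonneg fun y _ => mul_nonneg (hμ x y) (sq_nonneg _)

theorem droLoss_eq_zero_of_forall_residual_eq_zero {ρ : X → ℝ} {μ πref r π : X → Y → ℝ}
    {τ : ℝ} {V : X → ℝ}
    (h : ∀ x y, μ x y ≠ 0 → r x y - V x - τ * Real.log (π x y / πref x y) = 0) :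
    droLoss ρ μ πref r τ π V = 0 := by
  unfold droLoss
  refine mul_eq_zero_of_right _ <| Finset.sum_eq_zero fun x _ =>
    mul_eq_zero_of_right _ <| Finset.sum_eq_zero fun y _ => ?_
  by_cases hμ : μ x y = 0
  · simp [hμ]
  · simp [h x y hμ]

end

theorem dro_stmt_3_general {X Y : Type*} [Fintype X] [Fintype Y]
    (ρ : X → ℝ) (hρ0 : ∀ x, 0 ≤ ρ x)
    (πref : X → Y → ℝ)
    (μ : X → Y → ℝ) (hμ0 : ∀ x y, 0 ≤ μ x y)
    (hsupp : ∀ x y, 0 < μ x y → 0 < πref x y)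
    (r : X → Y → ℝ) (τ : ℝ) (hτ : 0 < τ)
    (Vstar : X → ℝ)
    (πstar : X → Y → ℝ)
    (hπ : ∀ x y, πstar x y = πref x y * Real.exp (r x y / τ) / Real.exp (Vstar x / τ)) :
    droLoss ρ μ πref r τ πstar Vstar = 0 ∧
    ∀ (π : X → Y → ℝ) (V : X → ℝ), (∀ x y, 0 ≤ π x y) → (∀ x, ∑ y, π x y = 1) →
      (∀ x y, 0 < πref x y → 0 < π x y) →
      0 ≤ droLoss ρ μ πref r τ π V := by
  refine ⟨droLoss_eq_zero_of_forall_residual_eq_zero fun x y hμxy => ?_,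
    fun π V _ _ _ => droLoss_nonneg hρ0 hμ0 πref r τ π V⟩
  have hpos : 0 < πref x y := hsupp x y ((hμ0 x y).lt_of_ne' hμxy)
  rw [hπ]
  exact sub_sub_mul_log_gibbs_div_eq_zero hpos.ne' hτ.ne'

theorem dro_stmt_3 {X Y : Type*} [Fintype X] [Fintype Y] [Nonempty X] [Nonempty Y]
    (ρ : X → ℝ) (hρ0 : ∀ x, 0 ≤ ρ x) (hρ1 : ∑ x, ρ x = 1)
    (πref : X → Y → ℝ) (href0 : ∀ x y, 0 ≤ πref x y) (href1 : ∀ x, ∑ y, πref x y = 1)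
    (μ : X → Y → ℝ) (hμ0 : ∀ x y, 0 ≤ μ x y) (hμ1 : ∀ x, ∑ y, μ x y = 1)
    (hsupp : ∀ x y, 0 < μ x y → 0 < πref x y)
    (r : X → Y → ℝ) (τ : ℝ) (hτ : 0 < τ)
    (Vstar : X → ℝ)
    (hV : ∀ x, Vstar x = τ * Real.log (∑ y, πref x y * Real.exp (r x y / τ)))
    (πstar : X → Y → ℝ)
    (hπ : ∀ x y, πstar x y = πref x y * Real.exp (r x y / τ) / Real.exp (Vstar x / τ)) :
    droLoss ρ μ πref r τ πstar Vstar = 0 ∧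
    ∀ (π : X → Y → ℝ) (V : X → ℝ), (∀ x y, 0 ≤ π x y) → (∀ x, ∑ y, π x y = 1) →
      (∀ x y, 0 < πref x y → 0 < π x y) →
      0 ≤ droLoss ρ μ πref r τ π V :=
  dro_stmt_3_general ρ hρ0 πref μ hμ0 hsupp r τ hτ Vstar πstar hπ
end

section
/- Let X and Y be finite nonempty types, ρ a probability mass function on X, π_ref(·|x) and μ(·|x) probability mass functions on Y for each x, r : X × Y → ℝ, τ > 0, and let π be a conditional policy with π(y|x) > 0 and π_ref(y|x) > 0 whenever μ(y|x) > 0. Define V^π(x) = Σ_y μ(y|x)·(r(x,y) − τ·log(π(y|x)/π_ref(y|x))). Then for every V : X → ℝ, L(π, V) = L(π, V^π) + (1/2)·Σ_x ρ(x)·(V(x) − V^π(x))². -/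
theorem dro_stmt_6 {X Y : Type*} [Fintype X] [Fintype Y] [Nonempty X] [Nonempty Y]
    (ρ : X → ℝ) (hρ0 : ∀ x, 0 ≤ ρ x) (hρ1 : ∑ x, ρ x = 1)
    (πref : X → Y → ℝ) (href0 : ∀ x y, 0 ≤ πref x y) (href1 : ∀ x, ∑ y, πref x y = 1)
    (μ : X → Y → ℝ) (hμ0 : ∀ x y, 0 ≤ μ x y) (hμ1 : ∀ x, ∑ y, μ x y = 1)
    (r : X → Y → ℝ) (τ : ℝ) (hτ : 0 < τ)
    (π : X → Y → ℝ) (hπ0 : ∀ x y, 0 ≤ π x y) (hπ1 : ∀ x, ∑ y, π x y = 1)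
    (hπpos : ∀ x y, 0 < μ x y → 0 < π x y ∧ 0 < πref x y)
    (Vpi : X → ℝ)
    (hVpi : ∀ x, Vpi x = ∑ y, μ x y * (r x y - τ * Real.log (π x y / πref x y))) :
    ∀ V : X → ℝ,
      droLoss ρ μ πref r τ π V =
        droLoss ρ μ πref r τ π Vpi + (1 / 2) * ∑ x, ρ x * (V x - Vpi x) ^ 2 := by
  intro V
  have key : ∀ x, ∑ y, μ x y * (r x y - V x - τ * Real.log (π x y / πref x y)) ^ 2
      = (∑ y, μ x y * (r x y - Vpi x - τ * Real.log (π x y / πref x y)) ^ 2)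
        + (V x - Vpi x) ^ 2 := by
    intro x
    have h1 : ∑ y, μ x y * (r x y - V x - τ * Real.log (π x y / πref x y)) ^ 2
        = ∑ y, (μ x y * (r x y - Vpi x - τ * Real.log (π x y / πref x y)) ^ 2
          + ((V x - Vpi x) ^ 2 * μ x y
            + 2 * (Vpi x - V x) * (μ x y * (r x y - τ * Real.log (π x y / πref x y))
              - μ x y * Vpi x))) := by
      apply Finset.sum_congr rfl
      intro y _
      ring
    rw [h1, Finset.sum_add_distrib, Finset.sum_add_distrib, ← Finset.mul_sum,
      ← Finset.mul_sum, Finset.sum_sub_distrib, ← hVpi x, ← Finset.sum_mul, hμ1 x]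
    ring
  unfold droLoss
  have h2 : ∑ x, ρ x * ∑ y, μ x y * (r x y - V x - τ * Real.log (π x y / πref x y)) ^ 2
      = ∑ x, (ρ x * ∑ y, μ x y * (r x y - Vpi x - τ * Real.log (π x y / πref x y)) ^ 2
        + ρ x * (V x - Vpi x) ^ 2) := by
    apply Finset.sum_congr rfl
    intro x _
    rw [key x]; ring
  rw [h2, Finset.sum_add_distrib]
  ring
end

section
/- Let X and Y be finite nonempty types, ρ a probability mass function on X with ρ(x) > 0 for all x, and for each x let π_ref(·|x) and μ(·|x) be probability mass functions on Y with π_ref(y|x) > 0 and μ(y|x) > 0 for all y; let r : X × Y → ℝ, τ > 0, and V : X → ℝ. Suppose π_V is a conditional policy with π_V(y|x) > 0 for all x, y that minimises π ↦ L(π, V) over all conditional policies π with π(y|x) > 0 for all x, y. Then for every x and y, τ·log(π_V(y|x)/π_ref(y|x)) = r(x,y) − V(x) − (π_V(y|x)/μ(y|x))·(V^{π_V}(x) − V(x)), where V^{π_V}(x) = Σ_y μ(y|x)·(r(x,y) − τ·log(π_V(y|x)/π_ref(y|x))). -/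
open Finset Filter

theorem hasDerivAt_eq_of_minimal_on_fixed_mass {ι : Type*} [Fintype ι] {f : ι → ℝ → ℝ}
    {f' p : ι → ℝ} (hf : ∀ i, HasDerivAt (f i) (f' i) (p i)) (hp : ∀ i, 0 < p i)
    (hmin : ∀ q : ι → ℝ, (∀ i, 0 < q i) → ∑ i, q i = ∑ i, p i →
      ∑ i, f i (p i) ≤ ∑ i, f i (q i))
    (i j : ι) : f' i = f' j := by
  classical
  set d : ι → ℝ := Pi.single i 1 - Pi.single j 1
  have hderiv : HasDerivAt (fun t => ∑ k, f k (p k + t * d k)) (∑ k, f' k * d k) 0 :=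
    HasDerivAt.fun_sum fun k _ =>
      (hf k).comp_of_eq 0 ((hasDerivAt_mul_const (d k)).const_add (p k)) (by simp)
  have hlocal : IsLocalMin (fun t => ∑ k, f k (p k + t * d k)) 0 := by
    have hpos : ∀ᶠ t in nhds (0 : ℝ), ∀ k, 0 < p k + t * d k :=
      eventually_all.2 fun k => Tendsto.eventually_const_lt (hp k) <|
        (continuous_const.add (continuous_id.mul continuous_const)).tendsto' 0 (p k) (by simp)
    filter_upwards [hpos] with t ht
    simpa using hmin _ ht (by simp [sum_add_distrib, ← mul_sum, d, sum_sub_distrib])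
  have hzero := hlocal.hasDerivAt_eq_zero hderiv
  simp only [d, Pi.sub_apply, mul_sub, sum_sub_distrib, Pi.single_apply, mul_ite, mul_one,
    mul_zero, sum_ite_eq', mem_univ, if_true] at hzero
  linarith

theorem le_of_sum_mul_le_sum_mul_update {X P : Type*} [Fintype X] [DecidableEq X]
    {w : X → ℝ} {F : X → P → ℝ} {π : X → P} {x₀ : X} (hw : 0 < w x₀) {q : P}
    (h : ∑ x, w x * F x (π x) ≤ ∑ x, w x * F x (Function.update π x₀ q x)) :
    F x₀ (π x₀) ≤ F x₀ q := by
  have hrest : ∑ x ∈ {x₀}ᶜ, w x * F x (Function.update π x₀ q x) =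
      ∑ x ∈ {x₀}ᶜ, w x * F x (π x) :=
    sum_congr rfl fun x hx => by rw [Function.update_of_ne (by simpa using hx)]
  rw [Fintype.sum_eq_add_sum_compl x₀, Fintype.sum_eq_add_sum_compl x₀, Function.update_self,
    hrest] at h
  exact le_of_mul_le_mul_left (by linarith) hw

theorem hasDerivAt_mul_sub_mul_log_div_sq {m c τ a p : ℝ} (ha : a ≠ 0) (hp : p ≠ 0) :
    HasDerivAt (fun s => m * (c - τ * Real.log (s / a)) ^ 2)
      (-2 * τ * (m * (c - τ * Real.log (p / a)) / p)) p := by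
  have h := ((((hasDerivAt_id' p).div_const a).log (div_ne_zero hp ha)).const_mul τ
    |>.const_sub c).fun_pow 2 |>.const_mul m
  refine h.congr_deriv ?_
  field_simp
  ring

theorem eq_mul_sum_of_div_eq_div {ι : Type*} [Fintype ι] {a p : ι → ℝ} (hp : ∀ i, p i ≠ 0)
    (hp1 : ∑ i, p i = 1) (h : ∀ i j, a i / p i = a j / p j) (i : ι) :
    a i = p i * ∑ j, a j := by
  have hsum : ∑ j, a j = a i / p i :=
    calc ∑ j, a j = ∑ j, a i / p i * p j :=
          sum_congr rfl fun j _ => by rw [h i j, div_mul_cancel₀ _ (hp j)]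
      _ = a i / p i := by rw [← mul_sum, hp1, mul_one]
  rw [hsum, mul_div_cancel₀ _ (hp i)]

noncomputable def droRowLoss {Y : Type*} [Fintype Y] (μ πref r : Y → ℝ) (τ v : ℝ)
    (q : Y → ℝ) : ℝ :=
  ∑ y, μ y * (r y - v - τ * Real.log (q y / πref y)) ^ 2

theorem droRowLoss_le_of_droLoss_le {X Y : Type*} [Fintype X] [Fintype Y] {ρ : X → ℝ}
    {μ πref r : X → Y → ℝ} {τ : ℝ} {V : X → ℝ} {π : X → Y → ℝ}
    (hπpos : ∀ x y, 0 < π x y) (hπ1 : ∀ x, ∑ y, π x y = 1)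
    (hmin : ∀ π' : X → Y → ℝ, (∀ x y, 0 < π' x y) → (∀ x, ∑ y, π' x y = 1) →
      droLoss ρ μ πref r τ π V ≤ droLoss ρ μ πref r τ π' V)
    {x₀ : X} (hρ : 0 < ρ x₀) {q : Y → ℝ} (hqpos : ∀ y, 0 < q y) (hq1 : ∑ y, q y = 1) :
    droRowLoss (μ x₀) (πref x₀) (r x₀) τ (V x₀) (π x₀) ≤
      droRowLoss (μ x₀) (πref x₀) (r x₀) τ (V x₀) q := by
  classical
  have hupdate := hmin (Function.update π x₀ q)
    (fun x => by rcases eq_or_ne x x₀ with rfl | hx <;> simp [*])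
    (fun x => by rcases eq_or_ne x x₀ with rfl | hx <;> simp [*])
  exact le_of_sum_mul_le_sum_mul_update (F := fun x => droRowLoss (μ x) (πref x) (r x) τ (V x))
    hρ (le_of_mul_le_mul_left hupdate one_half_pos)

theorem dro_stmt_8_general {X Y : Type*} [Fintype X] [Fintype Y]
    (ρ : X → ℝ) (hρpos : ∀ x, 0 < ρ x)
    (πref : X → Y → ℝ) (hrefpos : ∀ x y, 0 < πref x y)
    (μ : X → Y → ℝ) (hμpos : ∀ x y, 0 < μ x y) (hμ1 : ∀ x, ∑ y, μ x y = 1)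
    (r : X → Y → ℝ) (τ : ℝ) (hτ : 0 < τ)
    (V : X → ℝ)
    (πV : X → Y → ℝ) (hπVpos : ∀ x y, 0 < πV x y) (hπV1 : ∀ x, ∑ y, πV x y = 1)
    (hmin : ∀ π : X → Y → ℝ, (∀ x y, 0 < π x y) → (∀ x, ∑ y, π x y = 1) →
      droLoss ρ μ πref r τ πV V ≤ droLoss ρ μ πref r τ π V)
    (VπV : X → ℝ)
    (hVπV : ∀ x, VπV x = ∑ y, μ x y * (r x y - τ * Real.log (πV x y / πref x y))) :
    ∀ x y, τ * Real.log (πV x y / πref x y) =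
      r x y - V x - (πV x y / μ x y) * (VπV x - V x) := by
  intro x y
  set g : Y → ℝ := fun y => r x y - V x - τ * Real.log (πV x y / πref x y) with hg
  have hrowMin : ∀ q : Y → ℝ, (∀ y, 0 < q y) → ∑ y, q y = ∑ y, πV x y →
      droRowLoss (μ x) (πref x) (r x) τ (V x) (πV x) ≤
        droRowLoss (μ x) (πref x) (r x) τ (V x) q := fun q hq hq1 =>
    droRowLoss_le_of_droLoss_le hπVpos hπV1 hmin (hρpos x) hq (hq1.trans (hπV1 x))
  have hfoc : ∀ y₁ y₂, μ x y₁ * g y₁ / πV x y₁ = μ x y₂ * g y₂ / πV x y₂ := fun y₁ y₂ =>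
    mul_left_cancel₀ (by linarith : -2 * τ ≠ 0) <| hasDerivAt_eq_of_minimal_on_fixed_mass
      (fun y => hasDerivAt_mul_sub_mul_log_div_sq (m := μ x y) (c := r x y - V x) (τ := τ)
        (hrefpos x y).ne' (hπVpos x y).ne') (hπVpos x) hrowMin y₁ y₂
  have hmass : ∑ y, μ x y * g y = VπV x - V x := by
    simp only [hg, hVπV, mul_sub, sum_sub_distrib, ← sum_mul, hμ1, one_mul]
    ring
  have hy := eq_mul_sum_of_div_eq_div (fun y => (hπVpos x y).ne') (hπV1 x) hfoc y
  rw [hmass] at hy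
  rw [div_mul_eq_mul_div, ← hy, mul_div_cancel_left₀ _ (hμpos x y).ne', hg]
  ring

theorem dro_stmt_8 {X Y : Type*} [Fintype X] [Fintype Y] [Nonempty X] [Nonempty Y]
    (ρ : X → ℝ) (hρpos : ∀ x, 0 < ρ x) (hρ1 : ∑ x, ρ x = 1)
    (πref : X → Y → ℝ) (hrefpos : ∀ x y, 0 < πref x y) (href1 : ∀ x, ∑ y, πref x y = 1)
    (μ : X → Y → ℝ) (hμpos : ∀ x y, 0 < μ x y) (hμ1 : ∀ x, ∑ y, μ x y = 1)
    (r : X → Y → ℝ) (τ : ℝ) (hτ : 0 < τ)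
    (V : X → ℝ)
    (πV : X → Y → ℝ) (hπVpos : ∀ x y, 0 < πV x y) (hπV1 : ∀ x, ∑ y, πV x y = 1)
    (hmin : ∀ π : X → Y → ℝ, (∀ x y, 0 < π x y) → (∀ x, ∑ y, π x y = 1) →
      droLoss ρ μ πref r τ πV V ≤ droLoss ρ μ πref r τ π V)
    (VπV : X → ℝ)
    (hVπV : ∀ x, VπV x = ∑ y, μ x y * (r x y - τ * Real.log (πV x y / πref x y))) :
    ∀ x y, τ * Real.log (πV x y / πref x y) =
      r x y - V x - (πV x y / μ x y) * (VπV x - V x) :=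
  dro_stmt_8_general ρ hρpos πref hrefpos μ hμpos hμ1 r τ hτ V πV hπVpos hπV1 hmin VπV hVπV
end

section
/- Let Y be a finite nonempty type, x a fixed prompt, and let π_ref(·|x) and μ(·|x) be probability mass functions on Y with π_ref(y|x) > 0 and μ(y|x) > 0 for all y; let r(x,·) : Y → ℝ, τ > 0, V(x) ∈ ℝ, and let π(·|x) be a probability mass function on Y with π(y|x) > 0 for all y. Define V^π(x) = Σ_y μ(y|x)·(r(x,y) − τ·log(π(y|x)/π_ref(y|x))), V*(x) = τ·log(Σ_y π_ref(y|x)·exp(r(x,y)/τ)), and π*(y|x) = π_ref(y|x)·exp(r(x,y)/τ)/exp(V*(x)/τ). If π satisfies the stationarity equation τ·log(π(y|x)/π_ref(y|x)) = r(x,y) − V(x) − (π(y|x)/μ(y|x))·(V^π(x) − V(x)) for all y, then τ·Σ_y μ(y|x)·log(π(y|x)/π*(y|x)) = V*(x) − V^π(x). -/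
theorem dro_stmt_10 {Y : Type*} [Fintype Y] [Nonempty Y]
    (πref : Y → ℝ) (hrefpos : ∀ y, 0 < πref y) (href1 : ∑ y, πref y = 1)
    (μ : Y → ℝ) (hμpos : ∀ y, 0 < μ y) (hμ1 : ∑ y, μ y = 1)
    (r : Y → ℝ) (τ : ℝ) (hτ : 0 < τ) (V : ℝ)
    (π : Y → ℝ) (hπpos : ∀ y, 0 < π y) (hπ1 : ∑ y, π y = 1)
    (Vpi : ℝ) (hVpi : Vpi = ∑ y, μ y * (r y - τ * Real.log (π y / πref y)))
    (Vstar : ℝ) (hVstar : Vstar = τ * Real.log (∑ y, πref y * Real.exp (r y / τ)))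
    (πstar : Y → ℝ)
    (hπstar : ∀ y, πstar y = πref y * Real.exp (r y / τ) / Real.exp (Vstar / τ))
    (hstat : ∀ y, τ * Real.log (π y / πref y) =
      r y - V - (π y / μ y) * (Vpi - V)) :
    τ * ∑ y, μ y * Real.log (π y / πstar y) = Vstar - Vpi := by
  have key : ∀ y, Real.log (π y / πstar y)
      = Real.log (π y / πref y) - r y / τ + Vstar / τ := by
    intro y
    rw [hπstar y]
    rw [div_div_eq_mul_div,
        Real.log_div (mul_pos (hπpos y) (Real.exp_pos _)).ne' (mul_pos (hrefpos y) (Real.exp_pos _)).ne',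
        Real.log_mul (ne_of_gt (hπpos y)) (Real.exp_ne_zero _),
        Real.log_mul (ne_of_gt (hrefpos y)) (Real.exp_ne_zero _),
        Real.log_exp, Real.log_exp,
        Real.log_div (ne_of_gt (hπpos y)) (ne_of_gt (hrefpos y))]
    ring
  calc τ * ∑ y, μ y * Real.log (π y / πstar y)
      = τ * ∑ y, μ y * (Real.log (π y / πref y) - r y / τ + Vstar / τ) := by
        simp only [key]
    _ = -(∑ y, μ y * (r y - τ * Real.log (π y / πref y))) + Vstar * ∑ y, μ y := by
        rw [Finset.mul_sum, ← Finset.sum_neg_distrib, Finset.mul_sum, ← Finset.sum_add_distrib]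
        refine Finset.sum_congr rfl fun y _ => ?_
        field_simp
        ring
    _ = Vstar - Vpi := by rw [hμ1, hVpi]; ring
end

section
/- Let Y be a finite nonempty type, x a fixed prompt, and let π_ref(·|x) and μ(·|x) be probability mass functions on Y with π_ref(y|x) > 0 and μ(y|x) > 0 for all y; let r(x,·) : Y → ℝ, τ > 0, V(x) ∈ ℝ, and let π_V(·|x) be a probability mass function on Y with π_V(y|x) > 0 for all y. Define V^{π_V}(x) = Σ_y μ(y|x)·(r(x,y) − τ·log(π_V(y|x)/π_ref(y|x))), V*(x) = τ·log(Σ_y π_ref(y|x)·exp(r(x,y)/τ)), and π*(y|x) = π_ref(y|x)·exp(r(x,y)/τ)/exp(V*(x)/τ). If π_V satisfies the stationarity equation τ·log(π_V(y|x)/π_ref(y|x)) = r(x,y) − V(x) − (π_V(y|x)/μ(y|x))·(V^{π_V}(x) − V(x)) for all y, then for all y, |log(π_V(y|x)/π*(y|x))| ≤ (2/τ)·max_{y'} |(V^{π_V}(x) − V(x))·(1 − π_V(y'|x)/μ(y'|x))|. -/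
theorem dro_stmt_12 {Y : Type*} [Fintype Y] [Nonempty Y]
    (πref : Y → ℝ) (hrefpos : ∀ y, 0 < πref y) (href1 : ∑ y, πref y = 1)
    (μ : Y → ℝ) (hμpos : ∀ y, 0 < μ y) (hμ1 : ∑ y, μ y = 1)
    (r : Y → ℝ) (τ : ℝ) (hτ : 0 < τ) (V : ℝ)
    (πV : Y → ℝ) (hπVpos : ∀ y, 0 < πV y) (hπV1 : ∑ y, πV y = 1)
    (VπV : ℝ) (hVπV : VπV = ∑ y, μ y * (r y - τ * Real.log (πV y / πref y)))
    (Vstar : ℝ) (hVstar : Vstar = τ * Real.log (∑ y, πref y * Real.exp (r y / τ)))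
    (πstar : Y → ℝ)
    (hπstar : ∀ y, πstar y = πref y * Real.exp (r y / τ) / Real.exp (Vstar / τ))
    (hstat : ∀ y, τ * Real.log (πV y / πref y) =
      r y - V - (πV y / μ y) * (VπV - V)) :
    ∀ y, |Real.log (πV y / πstar y)| ≤
      (2 / τ) * Finset.univ.sup' Finset.univ_nonempty
        (fun y' => |(VπV - V) * (1 - πV y' / μ y')|) := by
  have hτne : τ ≠ 0 := ne_of_gt hτ
  set E : ℝ := VπV - V with hE
  set d : Y → ℝ := fun z => (πV z / μ z - 1) * E with hd
  set M : ℝ := Finset.univ.sup' Finset.univ_nonempty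
      (fun y' => |(VπV - V) * (1 - πV y' / μ y')|) with hM
  have hMd : ∀ z, |d z| ≤ M := by
    intro z
    have h := Finset.le_sup' (fun y' => |(VπV - V) * (1 - πV y' / μ y')|)
      (Finset.mem_univ z)
    calc |d z| = |(VπV - V) * (1 - πV z / μ z)| := by
          simp only [hd, hE, abs_mul, abs_sub_comm, mul_comm]
      _ ≤ M := h
  have hkey : ∀ z, πV z = πref z * Real.exp ((r z - VπV - d z) / τ) := by
    intro z
    have hpos : 0 < πV z / πref z := div_pos (hπVpos z) (hrefpos z)
    have hlog : Real.log (πV z / πref z) = (r z - VπV - d z) / τ := by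
      have := hstat z
      field_simp
      rw [mul_comm]
      rw [this]
      simp only [hd, hE]
      ring
    have h2 : πV z / πref z = Real.exp ((r z - VπV - d z) / τ) := by
      rw [← hlog, Real.exp_log hpos]
    rw [← h2, mul_comm]
    exact (div_mul_cancel₀ _ (ne_of_gt (hrefpos z))).symm
  have hsum : Real.exp (VπV / τ)
      = ∑ z, πref z * Real.exp (r z / τ) * Real.exp (-(d z) / τ) := by
    have h1 : (∑ z, πref z * Real.exp (r z / τ) * Real.exp (-(d z) / τ))
        * Real.exp (-(VπV / τ)) = 1 := by
      rw [← hπV1, Finset.sum_mul]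
      apply Finset.sum_congr rfl
      intro z _
      rw [hkey z]
      rw [mul_assoc, mul_assoc, ← Real.exp_add, ← Real.exp_add]
      congr 1
      field_simp
      ring
    have h2 := congrArg (· * Real.exp (VπV / τ)) h1
    simp only [one_mul] at h2
    rw [mul_assoc, ← Real.exp_add, neg_add_cancel, Real.exp_zero, mul_one] at h2
    linarith [h2]
  set S : ℝ := ∑ z, πref z * Real.exp (r z / τ) with hS
  have hSpos : 0 < S := by
    apply Finset.sum_pos
    · intro z _; exact mul_pos (hrefpos z) (Real.exp_pos _)
    · exact Finset.univ_nonempty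
  have hub : Real.exp (VπV / τ) ≤ S * Real.exp (M / τ) := by
    rw [hsum, hS, Finset.sum_mul]
    apply Finset.sum_le_sum
    intro z _
    apply mul_le_mul_of_nonneg_left _ (mul_pos (hrefpos z) (Real.exp_pos _)).le
    apply Real.exp_le_exp.mpr
    rw [neg_div, neg_le, ← neg_div, div_le_div_iff_of_pos_right hτ]
    linarith [abs_le.mp (hMd z) |>.1]
  have hlb : S * Real.exp (-(M / τ)) ≤ Real.exp (VπV / τ) := by
    rw [hsum, hS, Finset.sum_mul]
    apply Finset.sum_le_sum
    intro z _
    apply mul_le_mul_of_nonneg_left _ (mul_pos (hrefpos z) (Real.exp_pos _)).le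
    apply Real.exp_le_exp.mpr
    rw [neg_div, neg_le_neg_iff, div_le_div_iff_of_pos_right hτ]
    linarith [abs_le.mp (hMd z) |>.2]
  have hVd : |VπV - Vstar| ≤ M := by
    have hlogub : VπV / τ ≤ Real.log S + M / τ := by
      have := Real.log_le_log (Real.exp_pos _) hub
      rwa [Real.log_exp, Real.log_mul (ne_of_gt hSpos) (Real.exp_ne_zero _),
        Real.log_exp] at this
    have hloglb : Real.log S - M / τ ≤ VπV / τ := by
      have := Real.log_le_log (by positivity) hlb
      rwa [Real.log_exp, Real.log_mul (ne_of_gt hSpos) (Real.exp_ne_zero _),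
        Real.log_exp, ← sub_eq_add_neg] at this
    have hV' : Vstar = τ * Real.log S := hVstar
    rw [abs_le]
    constructor
    · have := mul_le_mul_of_nonneg_left hloglb hτ.le
      rw [mul_sub, mul_div_cancel₀ _ hτne, mul_div_cancel₀ _ hτne] at this
      linarith
    · have := mul_le_mul_of_nonneg_left hlogub hτ.le
      rw [mul_add, mul_div_cancel₀ _ hτne, mul_div_cancel₀ _ hτne] at this
      linarith
  intro y
  have hratio : Real.log (πV y / πstar y) = (Vstar - VπV - d y) / τ := by
    have hstarpos : 0 < πstar y := by
      rw [hπstar y]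
      exact div_pos (mul_pos (hrefpos y) (Real.exp_pos _)) (Real.exp_pos _)
    have : πV y / πstar y = Real.exp ((Vstar - VπV - d y) / τ) := by
      rw [hπstar y, hkey y, div_div_eq_mul_div]
      rw [show πref y * Real.exp ((r y - VπV - d y) / τ) * Real.exp (Vstar / τ)
          = πref y * Real.exp (r y / τ) * Real.exp ((Vstar - VπV - d y) / τ) by
        rw [mul_assoc, mul_assoc, ← Real.exp_add, ← Real.exp_add]
        congr 1
        field_simp
        ring]
      exact mul_div_cancel_left₀ _ (mul_pos (hrefpos y) (Real.exp_pos _)).ne'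
    rw [this, Real.log_exp]
  rw [hratio, abs_div, abs_of_pos hτ, div_le_iff₀ hτ]
  have h1 : |Vstar - VπV - d y| ≤ 2 * M := by
    have := hMd y
    have h2 : |Vstar - VπV| ≤ M := by rwa [abs_sub_comm] at hVd
    calc |Vstar - VπV - d y| ≤ |Vstar - VπV| + |d y| := abs_sub _ _
      _ ≤ 2 * M := by linarith
  calc |Vstar - VπV - d y| ≤ 2 * M := h1
    _ = 2 / τ * M * τ := by field_simp
end

section
/- Let Y be a finite nonempty type, x a fixed prompt, and let π_ref(·|x) and μ(·|x) be probability mass functions on Y with π_ref(y|x) > 0 and μ(y|x) > 0 for all y; let r(x,·) : Y → ℝ, τ > 0, and let π_V(·|x) be a probability mass function on Y with π_V(y|x) > 0 for all y. Define V^{π_V}(x) = Σ_y μ(y|x)·(r(x,y) − τ·log(π_V(y|x)/π_ref(y|x))), V*(x) = τ·log(Σ_y π_ref(y|x)·exp(r(x,y)/τ)), and π*(y|x) = π_ref(y|x)·exp(r(x,y)/τ)/exp(V*(x)/τ). If π_V satisfies the stationarity equation τ·log(π_V(y|x)/π_ref(y|x)) = r(x,y) − V(x) − (π_V(y|x)/μ(y|x))·(V^{π_V}(x)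 − V(x)) for all y with V(x) = V^{π_V}(x), then π_V(y|x) = π*(y|x) for all y. -/
theorem dro_stmt_13 {Y : Type*} [Fintype Y] [Nonempty Y]
    (πref : Y → ℝ) (hrefpos : ∀ y, 0 < πref y) (href1 : ∑ y, πref y = 1)
    (μ : Y → ℝ) (hμpos : ∀ y, 0 < μ y) (hμ1 : ∑ y, μ y = 1)
    (r : Y → ℝ) (τ : ℝ) (hτ : 0 < τ) (V : ℝ)
    (πV : Y → ℝ) (hπVpos : ∀ y, 0 < πV y) (hπV1 : ∑ y, πV y = 1)
    (VπV : ℝ) (hVπV : VπV = ∑ y, μ y * (r y - τ * Real.log (πV y / πref y)))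
    (Vstar : ℝ) (hVstar : Vstar = τ * Real.log (∑ y, πref y * Real.exp (r y / τ)))
    (πstar : Y → ℝ)
    (hπstar : ∀ y, πstar y = πref y * Real.exp (r y / τ) / Real.exp (Vstar / τ))
    (hstat : ∀ y, τ * Real.log (πV y / πref y) =
      r y - V - (πV y / μ y) * (VπV - V))
    (hVeq : V = VπV) :
    ∀ y, πV y = πstar y := by
  have hπform : ∀ y, πV y = πref y * Real.exp (r y / τ) * Real.exp (-V / τ) := by
    intro y
    have h := hstat y
    rw [← hVeq, sub_self, mul_zero, sub_zero] at h
    have hlog : Real.log (πV y / πref y) = (r y - V) / τ := by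
      rw [eq_div_iff hτ.ne']; linarith
    have hpos : 0 < πV y / πref y := div_pos (hπVpos y) (hrefpos y)
    have := Real.exp_log hpos
    rw [hlog] at this
    have hπ : πV y = πref y * Real.exp ((r y - V) / τ) := by
      rw [this, mul_div_assoc', mul_comm, mul_div_assoc, div_self (hrefpos y).ne', mul_one]
    rw [hπ, mul_assoc, ← Real.exp_add]
    congr 1
    ring
  have hsum : (∑ y, πref y * Real.exp (r y / τ)) = Real.exp (V / τ) := by
    have h1 : (1 : ℝ) = (∑ y, πref y * Real.exp (r y / τ)) * Real.exp (-V / τ) := by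
      rw [← hπV1]
      rw [Finset.sum_mul]
      exact Finset.sum_congr rfl fun y _ => hπform y
    have hne : Real.exp (-V / τ) ≠ 0 := Real.exp_ne_zero _
    have : (∑ y, πref y * Real.exp (r y / τ)) = (Real.exp (-V / τ))⁻¹ := by
      field_simp at h1 ⊢; linarith
    rw [this, ← Real.exp_neg, neg_div, neg_neg]
  have hVstar' : Vstar = V := by
    rw [hVstar, hsum, Real.log_exp]
    field_simp
  intro y
  rw [hπstar, hVstar', hπform y, neg_div, Real.exp_neg, div_eq_mul_inv]
  ring
end

section
/- Let X and Y be finite nonempty types, ρ a probability mass function on X, π_ref(·|x) and μ(·|x) probability mass functions on Y for each x, r : X × Y → ℝ, τ > 0, and let π be a conditional policy with π(y|x) > 0 and π_ref(y|x) > 0 whenever μ(y|x) > 0. Define V^π(x) = Σ_y μ(y|x)·(r(x,y) − τ·log(π(y|x)/π_ref(y|x))). Then L(π, V^π) = (1/4)·Σ_x ρ(x)·Σ_{y₁} Σ_{y₂} μ(y₁|x)·μ(y₂|x)·(r(x,y₂) − r(x,y₁) + τ·log(π(y₁|x)/π_ref(y₁|x)) − τ·log(π(y₂|x)/π_ref(y₂|x)))².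 -/
lemma var_pair {Y : Type*} [Fintype Y] (w g : Y → ℝ) (hw : ∑ y, w y = 1) :
    2 * ∑ y, w y * (g y - ∑ z, w z * g z) ^ 2
      = ∑ y₁, ∑ y₂, w y₁ * w y₂ * (g y₂ - g y₁) ^ 2 := by
  set V := ∑ z, w z * g z with hV
  have lhs : 2 * ∑ y, w y * (g y - V) ^ 2
      = 2 * ((∑ y, w y * g y ^ 2) - V ^ 2) := by
    have e : ∑ y, w y * (g y - V) ^ 2
        = ∑ y, (w y * g y ^ 2 - 2 * V * (w y * g y) + V ^ 2 * w y) :=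
      Finset.sum_congr rfl (fun y _ => by ring)
    rw [e, Finset.sum_add_distrib, Finset.sum_sub_distrib, ← Finset.mul_sum,
      ← Finset.mul_sum, hw, ← hV]
    ring
  have rhs : ∑ y₁, ∑ y₂, w y₁ * w y₂ * (g y₂ - g y₁) ^ 2
      = 2 * ((∑ y, w y * g y ^ 2) - V ^ 2) := by
    have inner : ∀ y₁ : Y, ∑ y₂, w y₁ * w y₂ * (g y₂ - g y₁) ^ 2
        = w y₁ * (∑ y, w y * g y ^ 2) - 2 * (w y₁ * g y₁) * V + w y₁ * g y₁ ^ 2 := by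
      intro y₁
      have e : ∑ y₂, w y₁ * w y₂ * (g y₂ - g y₁) ^ 2
          = ∑ y₂, (w y₁ * (w y₂ * g y₂ ^ 2)
            - 2 * (w y₁ * g y₁) * (w y₂ * g y₂) + (w y₁ * g y₁ ^ 2) * w y₂) :=
        Finset.sum_congr rfl (fun y₂ _ => by ring)
      rw [e, Finset.sum_add_distrib, Finset.sum_sub_distrib, ← Finset.mul_sum,
        ← Finset.mul_sum, ← Finset.mul_sum, hw, ← hV]
      ring
    rw [Finset.sum_congr rfl (fun y₁ _ => inner y₁), Finset.sum_add_distrib,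
      Finset.sum_sub_distrib, ← Finset.sum_mul, hw]
    have h3 : ∑ y, 2 * (w y * g y) * V = 2 * V * V := by
      rw [← Finset.sum_mul, ← Finset.mul_sum, ← hV]
    rw [h3]
    ring
  rw [lhs, rhs]

theorem dro_stmt_15 {X Y : Type*} [Fintype X] [Fintype Y] [Nonempty X] [Nonempty Y]
    (ρ : X → ℝ) (hρ0 : ∀ x, 0 ≤ ρ x) (hρ1 : ∑ x, ρ x = 1)
    (πref : X → Y → ℝ) (href0 : ∀ x y, 0 ≤ πref x y) (href1 : ∀ x, ∑ y, πref x y = 1)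
    (μ : X → Y → ℝ) (hμ0 : ∀ x y, 0 ≤ μ x y) (hμ1 : ∀ x, ∑ y, μ x y = 1)
    (r : X → Y → ℝ) (τ : ℝ) (hτ : 0 < τ)
    (π : X → Y → ℝ) (hπ0 : ∀ x y, 0 ≤ π x y) (hπ1 : ∀ x, ∑ y, π x y = 1)
    (hπpos : ∀ x y, 0 < μ x y → 0 < π x y ∧ 0 < πref x y)
    (Vpi : X → ℝ)
    (hVpi : ∀ x, Vpi x = ∑ y, μ x y * (r x y - τ * Real.log (π x y / πref x y))) :
    droLoss ρ μ πref r τ π Vpi =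
      (1 / 4) * ∑ x, ρ x * ∑ y₁, ∑ y₂, μ x y₁ * μ x y₂ *
        (r x y₂ - r x y₁ + τ * Real.log (π x y₁ / πref x y₁)
          - τ * Real.log (π x y₂ / πref x y₂)) ^ 2 := by
  unfold droLoss
  have key : ∀ x, 2 * ∑ y, μ x y * (r x y - Vpi x - τ * Real.log (π x y / πref x y)) ^ 2
      = ∑ y₁, ∑ y₂, μ x y₁ * μ x y₂ *
        (r x y₂ - r x y₁ + τ * Real.log (π x y₁ / πref x y₁)
          - τ * Real.log (π x y₂ / πref x y₂)) ^ 2 := by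
    intro x
    have := var_pair (μ x) (fun y => r x y - τ * Real.log (π x y / πref x y)) (hμ1 x)
    simp only [← hVpi x] at this
    have l : ∑ y, μ x y * (r x y - Vpi x - τ * Real.log (π x y / πref x y)) ^ 2
        = ∑ y, μ x y * (r x y - τ * Real.log (π x y / πref x y) - Vpi x) ^ 2 :=
      Finset.sum_congr rfl (fun y _ => by ring)
    have rr : (∑ y₁, ∑ y₂, μ x y₁ * μ x y₂ *
        (r x y₂ - r x y₁ + τ * Real.log (π x y₁ / πref x y₁)
          - τ * Real.log (π x y₂ / πref x y₂)) ^ 2)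
        = ∑ y₁, ∑ y₂, μ x y₁ * μ x y₂ *
          (r x y₂ - τ * Real.log (π x y₂ / πref x y₂)
            - (r x y₁ - τ * Real.log (π x y₁ / πref x y₁))) ^ 2 :=
      Finset.sum_congr rfl (fun y₁ _ => Finset.sum_congr rfl (fun y₂ _ => by ring))
    rw [l, rr]
    exact this
  rw [Finset.mul_sum, Finset.mul_sum]
  apply Finset.sum_congr rfl
  intro x _
  rw [← key x]
  ring
end

section
/- Let Y be a finite nonempty type and let π : ℝ → (Y → ℝ) be a family of probability mass functions on Y (so π(θ)(y) ≥ 0 and Σ_y π(θ)(y) = 1 for all θ), such that for each y the map θ ↦ π(θ)(y) is differentiable and π(θ)(y) > 0 for all θ, y. Let π_ref be a probability mass function on Y with π_ref(y) > 0 for all y. Then for every θ₀ ∈ ℝ, (1/2)·Σ_y π(θ₀)(y)·(d/dθ)|_{θ=θ₀} (log(π(θ)(y)/π_ref(y)))² = (d/dθ)|_{θ=θ₀} Σ_y π(θ)(y)·log(π(θ)(y)/π_ref(y)); that is, under on-policy sampling the expected gradient of the ℓ2-regularisation loss (1/2)·(log(π_θ(y)/π_ref(y)))² equals the gradient of the KL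 divergence KL(π_θ‖π_ref). -/
/-! Both sides equal `∑ y, π' y * log (π y / πref y)`. On the left the weight cancels through
`π * (log π)' = π'`; on the right the product rule leaves an extra `∑ y, π' y`, which vanishes
because `∑ y, π θ y` is constantly `1`. -/

lemma Finset.sum_derivs_eq_zero_of_sum_const {ι : Type*} (s : Finset ι) {f : ℝ → ι → ℝ}
    {f' : ι → ℝ} {x c : ℝ} (hf : ∀ i ∈ s, HasDerivAt (fun t => f t i) (f' i) x)
    (hsum : ∀ t, ∑ i ∈ s, f t i = c) : ∑ i ∈ s, f' i = 0 := by
  have hderiv := HasDerivAt.fun_sum hf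
  simp only [hsum] at hderiv
  exact hderiv.unique (hasDerivAt_const x c)

section LogRatio

variable {f : ℝ → ℝ} {f' x c : ℝ}

lemma HasDerivAt.log_div_const (hf : HasDerivAt f f' x) (hx : f x ≠ 0) (hc : c ≠ 0) :
    HasDerivAt (fun t => Real.log (f t / c)) (f' / f x) x := by
  convert (hf.div_const c).log (div_ne_zero hx hc) using 1
  field_simp

lemma HasDerivAt.log_div_const_sq (hf : HasDerivAt f f' x) (hx : f x ≠ 0) (hc : c ≠ 0) :
    HasDerivAt (fun t => Real.log (f t / c) ^ 2) (2 * Real.log (f x / c) * (f' / f x)) x := by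
  simpa using (hf.log_div_const hx hc).fun_pow 2

lemma HasDerivAt.mul_log_div_const (hf : HasDerivAt f f' x) (hx : f x ≠ 0) (hc : c ≠ 0) :
    HasDerivAt (fun t => f t * Real.log (f t / c)) (f' * Real.log (f x / c) + f') x := by
  simpa only [mul_div_cancel₀ f' hx] using hf.fun_mul (hf.log_div_const hx hc)

end LogRatio

theorem dro_stmt_16_general {Y : Type*} [Fintype Y]
    (π : ℝ → Y → ℝ) (hπ0 : ∀ θ y, 0 < π θ y) (hπ1 : ∀ θ, ∑ y, π θ y = 1)
    (hdiff : ∀ y, Differentiable ℝ (fun θ => π θ y))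
    (πref : Y → ℝ) (hrefpos : ∀ y, 0 < πref y) :
    ∀ θ₀ : ℝ,
      (1 / 2) * ∑ y, π θ₀ y *
          deriv (fun θ => (Real.log (π θ y / πref y)) ^ 2) θ₀ =
        deriv (fun θ => ∑ y, π θ y * Real.log (π θ y / πref y)) θ₀ := by
  intro θ₀
  have hd : ∀ y, HasDerivAt (fun θ => π θ y) (deriv (fun θ => π θ y) θ₀) θ₀ :=
    fun y => (hdiff y θ₀).hasDerivAt
  have hπne : ∀ y, π θ₀ y ≠ 0 := fun y => (hπ0 θ₀ y).ne'
  have hrefne : ∀ y, πref y ≠ 0 := fun y => (hrefpos y).ne'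
  have hd_sum : ∑ y, deriv (fun θ => π θ y) θ₀ = 0 :=
    Finset.univ.sum_derivs_eq_zero_of_sum_const (fun y _ => hd y) hπ1
  rw [(HasDerivAt.fun_sum fun y _ => (hd y).mul_log_div_const (hπne y) (hrefne y)).deriv,
    Finset.sum_add_distrib, hd_sum, add_zero, Finset.mul_sum]
  refine Finset.sum_congr rfl fun y _ => ?_
  rw [((hd y).log_div_const_sq (hπne y) (hrefne y)).deriv]
  field_simp [hπne y]

theorem dro_stmt_16 {Y : Type*} [Fintype Y] [Nonempty Y]
    (π : ℝ → Y → ℝ) (hπ0 : ∀ θ y, 0 < π θ y) (hπ1 : ∀ θ, ∑ y, π θ y = 1)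
    (hdiff : ∀ y, Differentiable ℝ (fun θ => π θ y))
    (πref : Y → ℝ) (hrefpos : ∀ y, 0 < πref y) (href1 : ∑ y, πref y = 1) :
    ∀ θ₀ : ℝ,
      (1 / 2) * ∑ y, π θ₀ y *
          deriv (fun θ => (Real.log (π θ y / πref y)) ^ 2) θ₀ =
        deriv (fun θ => ∑ y, π θ y * Real.log (π θ y / πref y)) θ₀ :=
  dro_stmt_16_general π hπ0 hπ1 hdiff πref hrefpos
end
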